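/- The product of two almost-Riordan arrays of the form (g, g f/x, f) and (u, u v/x, v) equals (g·u(f), g·u(f)·v(f)/x, v(f)); hence the subset of almost-Riordan arrays of the form (g, g f/x, f) is closed under the product. -/

import Mathlib

open PowerSeries Finset

/-- Shift: `shift h = (h - h₀)/x`, i.e. the series with coefficients `h₁, h₂, …`. -/
noncomputable def shift (h : PowerSeries ℤ) : PowerSeries ℤ :=
  PowerSeries.mk fun n => coeff (n + 1) h

/-- Composition `h ∘ f` of formal power series (intended for `f` with zero constant term,
in which case `coeff n (f ^ k) = 0` for `k > n`). -/
noncomputable def comp (h f : PowerSeries ℤ) : PowerSeries ℤ :=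
  PowerSeries.mk fun n => ∑ k ∈ Finset.range (n + 1), coeff k h * coeff n (f ^ k)

/-- Action of an almost-Riordan array `(a,g,f)` on a power series `b`:
`(a,g,f)·b = b₀ a + x g b̃(f)` where `b̃ = (b - b₀)/x`. -/
noncomputable def act (a g f b : PowerSeries ℤ) : PowerSeries ℤ :=
  C (coeff 0 b) * a + X * g * comp (shift b) f

/-- Product of almost-Riordan arrays: `(a,g,f)·(b,u,v) = ((a,g,f)·b, g·u(f), v(f))`. -/
noncomputable def arMul (t s : PowerSeries ℤ × PowerSeries ℤ × PowerSeries ℤ) :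
    PowerSeries ℤ × PowerSeries ℤ × PowerSeries ℤ :=
  (act t.1 t.2.1 t.2.2 s.1, t.2.1 * comp s.2.1 t.2.2, comp s.2.2 t.2.2)

/-- `(a,g,f)` is an almost-Riordan array: `a₀ = 1`, `g₀ = 1`, `f₀ = 0`, `f₁ = 1`. -/
def isAR (t : PowerSeries ℤ × PowerSeries ℤ × PowerSeries ℤ) : Prop :=
  coeff 0 t.1 = 1 ∧ coeff 0 t.2.1 = 1 ∧ coeff 0 t.2.2 = 0 ∧ coeff 1 t.2.2 = 1

/-!
Since `f` has zero constant term, `comp · f` is the substitution `PowerSeries.subst f`, hence a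
ring homomorphism. Splitting `b = b₀ + x b̃` gives `b(f) = b₀ + f b̃(f)`; together with
`f = x · (f/x)` this shows that `(g, g f/x, f)` acts by `b ↦ g b(f)` and that
`v(f)/x = (f/x) · ṽ(f)`, from which the product is read off componentwise.
-/

theorem shift_C_add_X_mul (c : ℤ) (w : PowerSeries ℤ) : shift (C c + X * w) = w := by
  ext n
  simp only [shift, coeff_mk, map_add, coeff_succ_X_mul, coeff_C, Nat.succ_ne_zero, if_false,
    zero_add]

section

variable {f : PowerSeries ℤ}

theorem X_mul_shift_of_coeff_zero_eq_zero (hf : coeff 0 f = 0) :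
    X * shift f = f := by
  conv_rhs => rw [eq_X_mul_shift_add_const f, ← coeff_zero_eq_constantCoeff_apply, hf, map_zero,
    add_zero]
  rfl

lemma coeff_pow_eq_zero_of_lt (hf : coeff 0 f = 0) {n k : ℕ} (h : n < k) :
    coeff n (f ^ k) = 0 :=
  X_pow_dvd_iff.mp (pow_dvd_pow_of_dvd (X_dvd_iff.mpr (by simpa using hf)) k) n h

lemma hasSubst_of_coeff_zero_eq_zero (hf : coeff 0 f = 0) : HasSubst f :=
  HasSubst.of_constantCoeff_zero' (by rwa [← coeff_zero_eq_constantCoeff_apply])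

theorem comp_eq_subst (hf : coeff 0 f = 0) (h : PowerSeries ℤ) : comp h f = h.subst f := by
  ext n
  rw [coeff_subst' (hasSubst_of_coeff_zero_eq_zero hf), comp, coeff_mk,
    finsum_eq_sum_of_support_subset _ (s := range (n + 1))]
  · simp only [smul_eq_mul]
  · intro k hk
    contrapose! hk
    simp [coeff_pow_eq_zero_of_lt hf (by simpa using hk : n < k)]

theorem comp_mul (hf : coeff 0 f = 0) (b c : PowerSeries ℤ) :
    comp (b * c) f = comp b f * comp c f := by
  simp only [comp_eq_subst hf, subst_mul (hasSubst_of_coeff_zero_eq_zero hf)]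

theorem comp_eq_C_add_mul_comp_shift (hf : coeff 0 f = 0) (h : PowerSeries ℤ) :
    comp h f = C (coeff 0 h) + f * comp (shift h) f := by
  have hs := hasSubst_of_coeff_zero_eq_zero hf
  conv_lhs => rw [eq_X_mul_shift_add_const h]
  simp only [comp_eq_subst hf, subst_add hs, subst_mul hs, subst_X hs, subst_C]
  rw [add_comm, coeff_zero_eq_constantCoeff_apply]
  rfl

theorem shift_comp (hf : coeff 0 f = 0) (h : PowerSeries ℤ) :
    shift (comp h f) = shift f * comp (shift h) f :=
  calc shift (comp h f)
      = shift (C (coeff 0 h) + X * (shift f * comp (shift h) f)) := by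
        rw [← mul_assoc, X_mul_shift_of_coeff_zero_eq_zero hf, comp_eq_C_add_mul_comp_shift hf]
    _ = shift f * comp (shift h) f := shift_C_add_X_mul _ _

theorem act_mul_shift (hf : coeff 0 f = 0) (g b : PowerSeries ℤ) :
    act g (g * shift f) f b = g * comp b f := by
  rw [act, comp_eq_C_add_mul_comp_shift hf b]
  linear_combination g * comp (shift b) f * X_mul_shift_of_coeff_zero_eq_zero hf

end

theorem statement8_general (g f u v : PowerSeries ℤ)
    (hf0 : coeff 0 f = 0) :
    arMul (g, g * shift f, f) (u, u * shift v, v) =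
      (g * comp u f, (g * comp u f) * shift (comp v f), comp v f) := by
  refine Prod.ext (act_mul_shift hf0 g u) (Prod.ext ?_ rfl)
  change g * shift f * comp (u * shift v) f = g * comp u f * shift (comp v f)
  rw [comp_mul hf0, shift_comp hf0]
  ring

/-- `(g, gf/x, f)·(u, uv/x, v) = (g u(f), g u(f) v(f)/x, v(f))`:
the embedded copy of the Riordan group is closed under multiplication.
Note `f/x = shift f` since `f` has zero constant term. -/
theorem statement8 (g f u v : PowerSeries ℤ)
    (hg : coeff 0 g = 1) (hf0 : coeff 0 f = 0) (hf1 : coeff 1 f = 1)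
    (hu : coeff 0 u = 1) (hv0 : coeff 0 v = 0) (hv1 : coeff 1 v = 1) :
    arMul (g, g * shift f, f) (u, u * shift v, v) =
      (g * comp u f, (g * comp u f) * shift (comp v f), comp v f) :=
  statement8_general g f u v hf0
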